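/- arXiv:1707.04944 — 5 statements merged into one kernel-verified Lean document; each statement's English description precedes it below -/
import Mathlib

section
/- A Hippasus number β > 1 has at most one Hippasus successor: if α and α' both satisfy α, α' ≥ β and β(β+α) − α² = ±1 and β(β+α') − α'² = ±1, then α = α'. -/
/-- Fibonacci numbers with F(0)=1, F(1)=1, F(n)=F(n-2)+F(n-1). -/
def F : ℕ → ℤ
  | 0 => 1
  | 1 => 1
  | n + 2 => F n + F (n + 1)

/-- `α` is a Hippasus successor of `β`: `α ≥ β` and `β(β+α) − α² = ±1`. -/
def IsHipSucc (β α : ℤ) : Prop :=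
  α ≥ β ∧ (β * (β + α) - α ^ 2 = 1 ∨ β * (β + α) - α ^ 2 = -1)

/-- `β` is a Hippasus number: a positive integer having a Hippasus successor. -/
def Hippasus (β : ℤ) : Prop := 0 < β ∧ ∃ α : ℤ, IsHipSucc β α

theorem successor_unique (β α α' : ℤ) (hβ : β > 1)
    (h : IsHipSucc β α) (h' : IsHipSucc β α') : α = α' := by
  obtain ⟨ha, hv⟩ := h
  obtain ⟨ha', hv'⟩ := h'
  by_contra hne
  rcases lt_or_gt_of_ne hne with hlt | hgt <;>
    rcases hv with hv | hv <;> rcases hv' with hv' | hv' <;>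
      nlinarith [mul_le_mul_of_nonneg_left ha (le_of_lt (lt_trans zero_lt_one hβ)),
        sq_nonneg (α - α'), sq_nonneg (α + α' - β)]
end

section
/- If a is a Hippasus number and b is a Hippasus successor of a, then a + b is a Hippasus number. -/
theorem sum_is_hippasus (a b : ℤ) (ha : 0 < a) (h : IsHipSucc a b) :
    Hippasus (a + b) := by
  obtain ⟨hab, hpm⟩ := h
  have hb : 0 < b := lt_of_lt_of_le ha hab
  refine ⟨by linarith, a + 2 * b, by linarith, ?_⟩
  have key : (a + b) * ((a + b) + (a + 2 * b)) - (a + 2 * b) ^ 2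
      = a * (a + b) - b ^ 2 := by ring
  rcases hpm with h1 | h1
  · left; rw [key, h1]
  · right; rw [key, h1]
end

section
/- Every Hippasus number is a Fibonacci number: if β is a positive integer for which there exists an integer α ≥ β with β(β+α) − α² = ±1, then β = F(n) for some n ≥ 0. -/
lemma hip_key : ∀ m : ℕ, ∀ β α : ℤ, β ≤ (m : ℤ) → 0 < β → IsHipSucc β α →
    ∃ n : ℕ, β = F n ∧ α = F (n + 1) := by
  intro m
  induction m with
  | zero => intro β α hle hpos _; omega
  | succ k ih =>
    rintro β α hle hpos ⟨hαβ, hcas⟩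
    by_cases hb1 : β = 1
    · subst hb1
      rcases hcas with h | h
      · have h0 : α * (α - 1) = 0 := by linear_combination -h
        rcases mul_eq_zero.mp h0 with h1 | h1
        · omega
        · exact ⟨0, by simp [F], by simp [F]; omega⟩
      · have h0 : (α - 2) * (α + 1) = 0 := by linear_combination -h
        rcases mul_eq_zero.mp h0 with h1 | h1
        · exact ⟨1, by simp [F], by show α = F 2; simp [F]; omega⟩
        · omega
    · have hb2 : 2 ≤ β := by omega
      have hne : ¬ (2 * β ≤ α) := by
        intro hge; rcases hcas with h | h <;> nlinarith
      have hgt : β < α := by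
        rcases eq_or_lt_of_le hαβ with he | h'
        · exfalso; rcases hcas with h | h <;> nlinarith
        · exact h'
      have hrec : IsHipSucc (α - β) β := by
        constructor
        · omega
        · rcases hcas with h | h
          · right; linear_combination -h
          · left; linear_combination -h
      obtain ⟨n, hβ', hα'⟩ := ih (α - β) β (by omega) (by omega) hrec
      refine ⟨n + 1, hα', ?_⟩
      show α = F (n + 2)
      rw [F]; omega

theorem hippasus_is_fibonacci (β : ℤ) (hβ : 0 < β)
    (h : ∃ α : ℤ, IsHipSucc β α) : ∃ n : ℕ, β = F n := by
  obtain ⟨α, hs⟩ := h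
  obtain ⟨n, h1, _⟩ := hip_key β.toNat β α (by omega) hβ hs
  exact ⟨n, h1⟩
end

section
/- A positive integer is a Hippasus number if and only if it is a Fibonacci number. -/
lemma F_pos : ∀ n, 0 < F n
  | 0 => one_pos
  | 1 => one_pos
  | n + 2 => by
      have h1 := F_pos n
      have h2 := F_pos (n + 1)
      show 0 < F n + F (n + 1)
      omega

lemma F_le_succ : ∀ n, F n ≤ F (n + 1)
  | 0 => le_refl 1
  | n + 1 => by
      have h := F_pos n
      show F (n + 1) ≤ F n + F (n + 1)
      omega

lemma F_det : ∀ n, F n * (F n + F (n + 1)) - F (n + 1) ^ 2 = (-1) ^ n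
  | 0 => by norm_num [F]
  | n + 1 => by
      have h := F_det n
      have h2 : F (n + 2) = F n + F (n + 1) := rfl
      rw [h2, pow_succ]
      linear_combination (-1 : ℤ) * h

lemma forward : ∀ b : ℕ, ∀ β α : ℤ, β.toNat = b → 0 < β → IsHipSucc β α →
    ∃ n, β = F n ∧ α = F (n + 1) := by
  intro b
  induction b using Nat.strong_induction_on with
  | _ b ih =>
    rintro β α hb hβ ⟨hle, hdet⟩
    by_cases h1 : β = 1
    · subst h1
      have hα : α = 1 ∨ α = 2 := by
        rcases hdet with hd | hd
        · by_contra h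
          push_neg at h
          rcases h with ⟨h1, h2⟩
          have h3 : 3 ≤ α := by omega
          nlinarith
        · by_contra h
          push_neg at h
          rcases h with ⟨h1, h2⟩
          have h3 : 3 ≤ α := by omega
          nlinarith
      rcases hα with rfl | rfl
      · exact ⟨0, rfl, rfl⟩
      · exact ⟨1, rfl, by norm_num [F]⟩
    have hβ2 : 2 ≤ β := by omega
    have hαβ : β < α := by
      rcases lt_or_eq_of_le hle with h | h
      · exact h
      · exfalso; subst h; rcases hdet with h | h <;> nlinarith
    have hα2 : α < 2 * β := by
      by_contra h
      push_neg at h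
      rcases hdet with hd | hd <;> nlinarith
    have hsucc : IsHipSucc (α - β) β := by
      constructor
      · omega
      · rcases hdet with hd | hd
        · right; linarith
        · left; linarith
    obtain ⟨n, h1', h2'⟩ := ih (α - β).toNat (by omega) (α - β) β rfl (by omega) hsucc
    refine ⟨n + 1, h2', ?_⟩
    show α = F n + F (n + 1)
    omega

theorem hippasus_iff_fibonacci (β : ℤ) : Hippasus β ↔ ∃ n : ℕ, β = F n := by
  constructor
  · rintro ⟨hβ, α, hs⟩
    obtain ⟨n, h, _⟩ := forward β.toNat β α rfl hβ hs; exact ⟨n, h⟩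
  · rintro ⟨n, rfl⟩
    refine ⟨F_pos n, F (n + 1), F_le_succ n, ?_⟩
    have h := F_det n
    rcases neg_one_pow_eq_or ℤ n with hp | hp
    · left; rw [h, hp]
    · right; rw [h, hp]
end

section
/- (Wasteels) If x and y are positive integers with y² − xy − x² = ±1, then x and y are consecutive Fibonacci numbers: there exists n with x = F(n) and y = F(n+1). -/
lemma wasteels_aux : ∀ N : ℕ, ∀ x y : ℤ, 0 < x → 0 < y → y ≤ (N : ℤ) →
    (y ^ 2 - x * y - x ^ 2 = 1 ∨ y ^ 2 - x * y - x ^ 2 = -1) →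
    ∃ n : ℕ, x = F n ∧ y = F (n + 1) := by
  intro N
  induction N with
  | zero => intro x y hx hy hN h; omega
  | succ N ih =>
    intro x y hx hy hN h
    rcases lt_trichotomy x y with hlt | heq | hgt
    · have h' : x ^ 2 - (y - x) * x - (y - x) ^ 2 = 1 ∨
        x ^ 2 - (y - x) * x - (y - x) ^ 2 = -1 := by
        rcases h with h | h
        · right; linarith [h]
        · left; linarith [h]
      obtain ⟨n, h1, h2⟩ := ih (y - x) x (by omega) hx (by omega) h'
      exact ⟨n + 1, h2, by rw [show n + 1 + 1 = n + 2 from rfl, F]; omega⟩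
    · subst heq
      have hx1 : x = 1 := by
        rcases h with h | h <;> nlinarith [sq_nonneg (x - 1), sq_nonneg (x + 1)]
      exact ⟨0, by simp [F, hx1]⟩
    · exfalso; rcases h with h | h <;> nlinarith

theorem wasteels (x y : ℤ) (hx : 0 < x) (hy : 0 < y)
    (h : y ^ 2 - x * y - x ^ 2 = 1 ∨ y ^ 2 - x * y - x ^ 2 = -1) :
    ∃ n : ℕ, x = F n ∧ y = F (n + 1) := by
  exact wasteels_aux y.toNat x y hx hy (by omega) h
end
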